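/- Let X₁, X₂ and Y be Banach spaces, let X = X₁ ⊕_∞ X₂, and let T : X → Y be a bounded linear operator with restrictions T₁ and T₂. If T₁ and T₂ are narrow operators, then T is a narrow operator. -/

import Mathlib

/-!
Let `‖x₁‖ = 1`, say. Look for a witness `z = (z₁, y₂)` that leaves the second coordinate of `y`
alone: then `T (y - z) = T₁ (y₁ - z₁)`, `‖x + z‖ ≥ ‖x₁ + z₁‖`, and `‖z‖ = 1` as soon as
`‖z₁‖ ≤ 1`, with `‖z₁‖ = 1` needed only when `‖y₁‖ = 1`. So narrowness of `T₁` must be extended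
to points `y₁` of the closed unit ball. Such a point lies on a segment between unit vectors,
`y₁ = s u + (1 - s) v`. Take a witness `w₂` for `(x₁, v)`, then a witness `w₁` for `(x', u)`,
where `x'` is the direction of `q = x₁ + (1 - s) w₂`. A functional norming `x' + w₁` is almost
`1` on both `x'` and `w₁`, so `x₁ + s w₁ + (1 - s) w₂ = ‖q‖ x' + s w₁` has norm close to
`‖q‖ + s ≥ 2 - δ`, while `y₁ - (s w₁ + (1 - s) w₂)` is a convex combination of `u - w₁` and
`v - w₂`.
-/
open Set

/-- A bounded linear operator `T : X → Y` is *narrow* if for every `x, y` in the unit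
sphere of `X`, every continuous linear functional `f` on `X` and every `ε > 0` there is
`z` in the unit sphere with `‖x + z‖ ≥ 2 - ε` and `‖T (y - z)‖ + |f (y - z)| ≤ ε`. -/
def IsNarrow {X Y : Type*} [NormedAddCommGroup X] [NormedSpace ℝ X]
    [NormedAddCommGroup Y] [NormedSpace ℝ Y] (T : X →L[ℝ] Y) : Prop :=
  ∀ x y : X, ‖x‖ = 1 → ‖y‖ = 1 → ∀ f : X →L[ℝ] ℝ, ∀ ε : ℝ, 0 < ε →
    ∃ z : X, ‖z‖ = 1 ∧ 2 - ε ≤ ‖x + z‖ ∧ ‖T (y - z)‖ + |f (y - z)| ≤ ε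

section NormedSpace

variable {E : Type*} [NormedAddCommGroup E] [NormedSpace ℝ E]

theorem exists_nonneg_norm_add_smul_eq {x : E} (hx : x ≠ 0) {y : E} {r : ℝ} (hy : ‖y‖ ≤ r) :
    ∃ t : ℝ, 0 ≤ t ∧ ‖y + t • x‖ = r := by
  have hx' : 0 < ‖x‖ := norm_pos_iff.2 hx
  have hr : 0 ≤ r := (norm_nonneg y).trans hy
  have hfar : r ≤ ‖y + (2 * r / ‖x‖) • x‖ := by
    have := norm_sub_norm_le ((2 * r / ‖x‖) • x) (-y)
    rw [sub_neg_eq_add, norm_neg, add_comm, norm_smul, Real.norm_of_nonneg (by positivity),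
      div_mul_cancel₀ _ hx'.ne'] at this
    linarith
  obtain ⟨t, ht, hty⟩ := intermediate_value_Icc (by positivity : (0 : ℝ) ≤ 2 * r / ‖x‖)
    (by fun_prop : Continuous fun t : ℝ => ‖y + t • x‖).continuousOn
    ⟨by simpa using hy, hfar⟩
  exact ⟨t, ht.1, hty⟩

theorem exists_norm_eq_mem_segment [Nontrivial E] {y : E} {r : ℝ} (hy : ‖y‖ ≤ r) :
    ∃ u v : E, ‖u‖ = r ∧ ‖v‖ = r ∧ y ∈ segment ℝ u v := by
  obtain ⟨x, hx⟩ := exists_ne (0 : E)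
  obtain ⟨a, ha, hu⟩ := exists_nonneg_norm_add_smul_eq hx hy
  obtain ⟨b, hb, hv⟩ := exists_nonneg_norm_add_smul_eq (neg_ne_zero.2 hx) hy
  refine ⟨_, _, hu, hv, mem_segment_iff_sameRay.2 ?_⟩
  simpa using ((SameRay.refl x).nonneg_smul_left ha).nonneg_smul_right hb

theorem add_mul_one_sub_le_norm_smul_add_smul {a b : E} (ha : ‖a‖ ≤ 1) (hb : ‖b‖ ≤ 1) {δ : ℝ}
    (hab : 2 - δ ≤ ‖a + b‖) {α β : ℝ} (hα : 0 ≤ α) (hβ : 0 ≤ β) :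
    (α + β) * (1 - δ) ≤ ‖α • a + β • b‖ := by
  obtain ⟨g, hg, hgab⟩ := exists_dual_vector'' ℝ (a + b)
  simp only [map_add, RCLike.ofReal_real_eq_id, id_eq] at hgab
  have hle (w : E) : g w ≤ ‖w‖ :=
    (le_abs_self _).trans ((g.le_opNorm w).trans (mul_le_of_le_one_left (norm_nonneg w) hg))
  have hga : 1 - δ ≤ g a := by linarith [hle b]
  have hgb : 1 - δ ≤ g b := by linarith [hle a]
  calc (α + β) * (1 - δ) ≤ α * g a + β * g b := by nlinarith
    _ = g (α • a + β • b) := by simp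
    _ ≤ ‖α • a + β • b‖ := hle _

theorem convexOn_norm_apply_add_abs_apply {F : Type*} [NormedAddCommGroup F] [NormedSpace ℝ F]
    (T : E →L[ℝ] F) (f : E →L[ℝ] ℝ) : ConvexOn ℝ univ fun w => ‖T w‖ + |f w| :=
  ((convexOn_norm convex_univ).comp_linearMap T.toLinearMap).add
    ((convexOn_norm convex_univ).comp_linearMap f.toLinearMap)

end NormedSpace

namespace IsNarrow

variable {X Y : Type*} [NormedAddCommGroup X] [NormedSpace ℝ X]
  [NormedAddCommGroup Y] [NormedSpace ℝ Y] {T : X →L[ℝ] Y}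

theorem exists_of_norm_le_one (hT : IsNarrow T) {x y : X} (hx : ‖x‖ = 1) (hy : ‖y‖ ≤ 1)
    (f : X →L[ℝ] ℝ) {ε : ℝ} (hε : 0 < ε) :
    ∃ z, ‖z‖ ≤ 1 ∧ 2 - ε ≤ ‖x + z‖ ∧ ‖T (y - z)‖ + |f (y - z)| ≤ ε := by
  have : Nontrivial X := nontrivial_of_ne x 0 (ne_zero_of_norm_ne_zero (by simp [hx]))
  obtain ⟨δ, hδ, hδ1, hδε⟩ : ∃ δ : ℝ, 0 < δ ∧ δ < 1 ∧ 3 * δ ≤ ε :=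
    ⟨min (ε / 3) (1 / 2), by positivity, by linarith [min_le_right (ε / 3) (1 / 2)],
      by linarith [min_le_left (ε / 3) (1 / 2)]⟩
  obtain ⟨u, v, hu, hv, s, t, hs, ht, hst, rfl⟩ := exists_norm_eq_mem_segment hy
  obtain rfl : t = 1 - s := by linarith
  obtain ⟨w₂, hw₂, hxw₂, hvw₂⟩ := hT x v hx hv f δ hδ
  set q := x + (1 - s) • w₂
  have hq : 2 - δ - s ≤ ‖q‖ := by
    have h := norm_add_le q (s • w₂)
    rw [show q + s • w₂ = x + w₂ by simp only [q]; module, norm_smul, hw₂,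
      Real.norm_of_nonneg hs] at h
    linarith
  have hq₀ : ‖q‖ ≠ 0 := by linarith
  have hx' : ‖‖q‖⁻¹ • q‖ = 1 := norm_smul_inv_norm (norm_ne_zero_iff.1 hq₀)
  obtain ⟨w₁, hw₁, hxw₁, huw₁⟩ := hT (‖q‖⁻¹ • q) u hx' hu f δ hδ
  refine ⟨s • w₁ + (1 - s) • w₂, ?_, ?_, ?_⟩
  · simpa using (convex_closedBall (0 : X) 1) (by simp [hw₁]) (by simp [hw₂]) hs ht (by ring)
  · have hxz : x + (s • w₁ + (1 - s) • w₂) = ‖q‖ • (‖q‖⁻¹ • q) + s • w₁ := by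
      rw [smul_inv_smul₀ hq₀]; module
    have := add_mul_one_sub_le_norm_smul_add_smul hx'.le hw₁.le hxw₁ (norm_nonneg q) hs
    rw [hxz]
    nlinarith
  · have hyz : s • u + (1 - s) • v - (s • w₁ + (1 - s) • w₂)
        = s • (u - w₁) + (1 - s) • (v - w₂) := by module
    have := (convexOn_norm_apply_add_abs_apply T f).2 trivial trivial hs ht (by ring)
      (x := u - w₁) (y := v - w₂)
    simp only [smul_eq_mul] at this
    rw [hyz]
    nlinarith

theorem exists_max_norm_eq_one (hT : IsNarrow T) {x y : X} (hx : ‖x‖ = 1) {r : ℝ}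
    (hy : max ‖y‖ r = 1) (f : X →L[ℝ] ℝ) {ε : ℝ} (hε : 0 < ε) :
    ∃ z, max ‖z‖ r = 1 ∧ 2 - ε ≤ ‖x + z‖ ∧ ‖T (y - z)‖ + |f (y - z)| ≤ ε := by
  by_cases hy₁ : ‖y‖ = 1
  · obtain ⟨z, hz, h⟩ := hT x y hx hy₁ f ε hε
    exact ⟨z, by rw [hz]; rwa [hy₁] at hy, h⟩
  · obtain ⟨z, hz, h⟩ := hT.exists_of_norm_le_one hx (hy ▸ le_max_left _ _) f hε
    have hr : r = 1 := (max_choice _ _).resolve_left (by rw [hy]; exact Ne.symm hy₁) ▸ hy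
    exact ⟨z, by rw [hr, max_eq_right hz], h⟩

end IsNarrow

section InftySum

variable {X₁ X₂ Y : Type*} [NormedAddCommGroup X₁] [NormedSpace ℝ X₁]
  [NormedAddCommGroup X₂] [NormedSpace ℝ X₂] [NormedAddCommGroup Y] [NormedSpace ℝ Y]
  {T : WithLp ⊤ (X₁ × X₂) →L[ℝ] Y}

theorem IsNarrow.exists_of_norm_fst_eq_one {T₁ : X₁ →L[ℝ] Y}
    (hT₁ : ∀ x₁ : X₁, T₁ x₁ = T (WithLp.toLp ⊤ (x₁, 0))) (h₁ : IsNarrow T₁)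
    {x y : WithLp ⊤ (X₁ × X₂)} (hx₁ : ‖x.fst‖ = 1) (hy : ‖y‖ = 1)
    (f : WithLp ⊤ (X₁ × X₂) →L[ℝ] ℝ) {ε : ℝ} (hε : 0 < ε) :
    ∃ z, ‖z‖ = 1 ∧ 2 - ε ≤ ‖x + z‖ ∧ ‖T (y - z)‖ + |f (y - z)| ≤ ε := by
  let f₁ : X₁ →L[ℝ] ℝ := f.comp
    ((WithLp.prodContinuousLinearEquiv ⊤ ℝ X₁ X₂).symm.toContinuousLinearMap.comp (.inl ℝ X₁ X₂))
  rw [WithLp.prod_norm_eq_sup] at hy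
  obtain ⟨z₁, hz, hxz, hyz⟩ := h₁.exists_max_norm_eq_one hx₁ hy f₁ hε
  refine ⟨WithLp.toLp ⊤ (z₁, y.snd), hz,
    hxz.trans (WithLp.norm_fst_le (x := x + WithLp.toLp ⊤ (z₁, y.snd))), ?_⟩
  have : y - WithLp.toLp ⊤ (z₁, y.snd) = WithLp.toLp ⊤ (y.fst - z₁, 0) :=
    (WithLp.ext_iff _).2 (Prod.ext rfl (sub_self y.snd))
  rwa [this, ← hT₁]

theorem IsNarrow.exists_of_norm_snd_eq_one {T₂ : X₂ →L[ℝ] Y}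
    (hT₂ : ∀ x₂ : X₂, T₂ x₂ = T (WithLp.toLp ⊤ (0, x₂))) (h₂ : IsNarrow T₂)
    {x y : WithLp ⊤ (X₁ × X₂)} (hx₂ : ‖x.snd‖ = 1) (hy : ‖y‖ = 1)
    (f : WithLp ⊤ (X₁ × X₂) →L[ℝ] ℝ) {ε : ℝ} (hε : 0 < ε) :
    ∃ z, ‖z‖ = 1 ∧ 2 - ε ≤ ‖x + z‖ ∧ ‖T (y - z)‖ + |f (y - z)| ≤ ε := by
  let f₂ : X₂ →L[ℝ] ℝ := f.comp
    ((WithLp.prodContinuousLinearEquiv ⊤ ℝ X₁ X₂).symm.toContinuousLinearMap.comp (.inr ℝ X₁ X₂))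
  rw [WithLp.prod_norm_eq_sup, max_comm] at hy
  obtain ⟨z₂, hz, hxz, hyz⟩ := h₂.exists_max_norm_eq_one hx₂ hy f₂ hε
  refine ⟨WithLp.toLp ⊤ (y.fst, z₂), (max_comm _ _).trans hz,
    hxz.trans (WithLp.norm_snd_le (x := x + WithLp.toLp ⊤ (y.fst, z₂))), ?_⟩
  have : y - WithLp.toLp ⊤ (y.fst, z₂) = WithLp.toLp ⊤ (0, y.snd - z₂) :=
    (WithLp.ext_iff _).2 (Prod.ext (sub_self y.fst) rfl)
  rwa [this, ← hT₂]

end InftySum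

theorem narrow_of_restrictions_inftySum_general
    {X₁ X₂ Y : Type*}
    [NormedAddCommGroup X₁] [NormedSpace ℝ X₁]
    [NormedAddCommGroup X₂] [NormedSpace ℝ X₂]
    [NormedAddCommGroup Y] [NormedSpace ℝ Y]
    (T : WithLp ⊤ (X₁ × X₂) →L[ℝ] Y)
    (T₁ : X₁ →L[ℝ] Y) (T₂ : X₂ →L[ℝ] Y)
    (hT₁ : ∀ x₁ : X₁, T₁ x₁ = T ((WithLp.prodContinuousLinearEquiv ⊤ ℝ X₁ X₂).symm (x₁, 0)))
    (hT₂ : ∀ x₂ : X₂, T₂ x₂ = T ((WithLp.prodContinuousLinearEquiv ⊤ ℝ X₁ X₂).symm (0, x₂)))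
    (h₁ : IsNarrow T₁) (h₂ : IsNarrow T₂) :
    IsNarrow T := by
  intro x y hx hy f ε hε
  rw [WithLp.prod_norm_eq_sup] at hx
  rcases max_choice ‖x.fst‖ ‖x.snd‖ with hmax | hmax
  · exact h₁.exists_of_norm_fst_eq_one hT₁ (hmax ▸ hx) hy f hε
  · exact h₂.exists_of_norm_snd_eq_one hT₂ (hmax ▸ hx) hy f hε

theorem narrow_of_restrictions_inftySum
    {X₁ X₂ Y : Type*}
    [NormedAddCommGroup X₁] [NormedSpace ℝ X₁] [CompleteSpace X₁]
    [NormedAddCommGroup X₂] [NormedSpace ℝ X₂] [CompleteSpace X₂]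
    [NormedAddCommGroup Y] [NormedSpace ℝ Y] [CompleteSpace Y]
    (T : WithLp ⊤ (X₁ × X₂) →L[ℝ] Y)
    (T₁ : X₁ →L[ℝ] Y) (T₂ : X₂ →L[ℝ] Y)
    (hT₁ : ∀ x₁ : X₁, T₁ x₁ = T ((WithLp.prodContinuousLinearEquiv ⊤ ℝ X₁ X₂).symm (x₁, 0)))
    (hT₂ : ∀ x₂ : X₂, T₂ x₂ = T ((WithLp.prodContinuousLinearEquiv ⊤ ℝ X₁ X₂).symm (0, x₂)))
    (h₁ : IsNarrow T₁) (h₂ : IsNarrow T₂) :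
    IsNarrow T :=
  narrow_of_restrictions_inftySum_general T T₁ T₂ hT₁ hT₂ h₁ h₂
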